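/- Let Ω = ℝ × (0,θ₀), 1 < p < ∞, β ∈ ℝ, and suppose the operator T_p φ = -(∂_x + β)²φ - ∂_θ²φ with domain D(T_p) = {φ ∈ W^{2,p}(Ω) : ∂_θ φ = 0 on ∂Ω} is an isomorphism onto L^p(Ω). Then for every g ∈ W^{1,p}(Ω) the unique solution φ ∈ D(T_p) of T_p φ = g satisfies φ ∈ W^{3,p}(Ω) and ‖φ‖_{W^{3,p}(Ω)} ≤ C ‖g‖_{W^{1,p}(Ω)} with a constant C independent of φ and g. -/

import Mathlib

open MeasureTheory Real Set

noncomputable section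

/-- Partial derivative in the first (x-) variable. -/
def dx (f : ℝ × ℝ → ℝ) (z : ℝ × ℝ) : ℝ := fderiv ℝ f z (1, 0)

/-- Partial derivative in the second (θ-) variable. -/
def dθ (f : ℝ × ℝ → ℝ) (z : ℝ × ℝ) : ℝ := fderiv ℝ f z (0, 1)

/-- `p`-th power integral of `f` over the layer `Ω = ℝ × (0, θ₀)`. -/
def layerNormP (θ₀ p : ℝ) (f : ℝ × ℝ → ℝ) : ENNReal :=
  ∫⁻ z in (univ ×ˢ Ioo (0:ℝ) θ₀), ENNReal.ofReal (|f z| ^ p)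

/-- The operator `T_p φ = -(∂_x + β)²φ - ∂_θ²φ` on the layer. -/
def Tlayer (β : ℝ) (φ : ℝ × ℝ → ℝ) (z : ℝ × ℝ) : ℝ :=
  -(dx (dx φ) z + 2 * β * dx φ z + β ^ 2 * φ z) - dθ (dθ φ) z

/-- `W^{2,p}(Ω)`-norm (p-th power form) on the layer `Ω = ℝ × (0,θ₀)`. -/
def normW2p (θ₀ p : ℝ) (f : ℝ × ℝ → ℝ) : ENNReal :=
  layerNormP θ₀ p f + layerNormP θ₀ p (dx f) + layerNormP θ₀ p (dθ f) +
    layerNormP θ₀ p (dx (dx f)) + layerNormP θ₀ p (dx (dθ f)) + layerNormP θ₀ p (dθ (dθ f))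

/-- `W^{1,p}(Ω)`-norm (p-th power form) on the layer. -/
def normW1p (θ₀ p : ℝ) (f : ℝ × ℝ → ℝ) : ENNReal :=
  layerNormP θ₀ p f + layerNormP θ₀ p (dx f) + layerNormP θ₀ p (dθ f)

/-- Third order part of the `W^{3,p}(Ω)`-norm (p-th power form). -/
def normThird (θ₀ p : ℝ) (f : ℝ × ℝ → ℝ) : ENNReal :=
  layerNormP θ₀ p (dx (dx (dx f))) + layerNormP θ₀ p (dθ (dx (dx f))) +
    layerNormP θ₀ p (dθ (dθ (dx f))) + layerNormP θ₀ p (dθ (dθ (dθ f)))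

/-- `φ` lies in the domain `D(T_p) = {φ ∈ W^{2,p}(Ω) : ∂_θ φ = 0 on ∂Ω}`. -/
def InLayerDomain (θ₀ p : ℝ) (φ : ℝ × ℝ → ℝ) : Prop :=
  ContDiff ℝ (⊤ : ℕ∞) φ ∧ normW2p θ₀ p φ < ⊤ ∧
    (∀ x : ℝ, dθ φ (x, 0) = 0) ∧ (∀ x : ℝ, dθ φ (x, θ₀) = 0)

/-! ### Auxiliary lemmas -/

/-- directional derivative -/
def pd (v : ℝ × ℝ) (f : ℝ × ℝ → ℝ) (z : ℝ × ℝ) : ℝ := fderiv ℝ f z v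

lemma pd_smooth {f : ℝ × ℝ → ℝ} (hf : ContDiff ℝ (⊤ : ℕ∞) f) (v : ℝ × ℝ) : ContDiff ℝ (⊤ : ℕ∞) (pd v f) :=
  (hf.fderiv_right (by simp)).clm_apply contDiff_const

lemma pd_cont {f : ℝ × ℝ → ℝ} (hf : ContDiff ℝ (⊤ : ℕ∞) f) (v : ℝ × ℝ) : Continuous (pd v f) :=
  (pd_smooth hf v).continuous

lemma dx_smooth {f : ℝ × ℝ → ℝ} (hf : ContDiff ℝ (⊤ : ℕ∞) f) : ContDiff ℝ (⊤ : ℕ∞) (dx f) :=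
  pd_smooth hf (1, 0)

lemma dθ_smooth {f : ℝ × ℝ → ℝ} (hf : ContDiff ℝ (⊤ : ℕ∞) f) : ContDiff ℝ (⊤ : ℕ∞) (dθ f) :=
  pd_smooth hf (0, 1)

lemma Tlayer_smooth {φ : ℝ × ℝ → ℝ} (β : ℝ) (hφ : ContDiff ℝ (⊤ : ℕ∞) φ) :
    ContDiff ℝ (⊤ : ℕ∞) (Tlayer β φ) := by
  have h1 : ContDiff ℝ (⊤ : ℕ∞) (dx (dx φ)) := dx_smooth (dx_smooth hφ)
  have h2 : ContDiff ℝ (⊤ : ℕ∞) (dx φ) := dx_smooth hφ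
  have h3 : ContDiff ℝ (⊤ : ℕ∞) (dθ (dθ φ)) := dθ_smooth (dθ_smooth hφ)
  show ContDiff ℝ (⊤ : ℕ∞) (fun z => -(dx (dx φ) z + 2 * β * dx φ z + β ^ 2 * φ z) - dθ (dθ φ) z)
  exact (((h1.add ((contDiff_const.mul h2))).add (contDiff_const.mul hφ)).neg).sub h3

lemma pd_quot {f : ℝ × ℝ → ℝ} (hf : ContDiff ℝ (⊤ : ℕ∞) f) (a : ℝ) (c : ℝ × ℝ) (v : ℝ × ℝ) :
    pd v (fun z => a * (f (z + c) - f z)) = fun z => a * (pd v f (z + c) - pd v f z) := by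
  funext z
  have h1 : HasFDerivAt (fun w : ℝ × ℝ => f (w + c)) (fderiv ℝ f (z + c)) z := by
    have := ((hf.differentiable (by simp) (z + c)).hasFDerivAt).comp z
      ((hasFDerivAt_id z).add_const c)
    simpa [Function.comp_def] using this
  have h2 : HasFDerivAt f (fderiv ℝ f z) z := (hf.differentiable (by simp) z).hasFDerivAt
  have h3 : HasFDerivAt (fun z => a * (f (z + c) - f z))
      (a • (fderiv ℝ f (z + c) - fderiv ℝ f z)) z := (h1.sub h2).const_mul a
  simp only [pd, h3.fderiv]
  simp [mul_sub]

lemma pd_comm {f : ℝ × ℝ → ℝ} (hf : ContDiff ℝ (⊤ : ℕ∞) f) (v w : ℝ × ℝ) :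
    pd w (pd v f) = pd v (pd w f) := by
  funext z
  have hd : ∀ u : ℝ × ℝ, fderiv ℝ (pd u f) z = (fderiv ℝ (fderiv ℝ f) z).flip u := by
    intro u
    have h1 : DifferentiableAt ℝ (fderiv ℝ f) z :=
      ((hf.fderiv_right (m := (⊤ : ℕ∞)) (by simp)).differentiable (by simp)) z
    have := fderiv_clm_apply (𝕜 := ℝ) h1 (differentiableAt_const u)
    rw [show pd u f = fun y => fderiv ℝ f y u from rfl]; simpa using this
  have hsymm := second_derivative_symmetric (f := f) (f' := fderiv ℝ f)
    (f'' := fderiv ℝ (fderiv ℝ f) z) (x := z)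
    (fun y => (hf.differentiable (by simp) y).hasFDerivAt)
    (((hf.fderiv_right (m := (⊤ : ℕ∞)) (by simp)).differentiable (by simp) z).hasFDerivAt) v w
  simp only [pd, hd v, hd w]
  exact hsymm.symm

lemma omega_meas (θ₀ : ℝ) : MeasurableSet (univ ×ˢ Ioo (0:ℝ) θ₀ : Set (ℝ × ℝ)) :=
  MeasurableSet.univ.prod measurableSet_Ioo

lemma omega_open (θ₀ : ℝ) : IsOpen (univ ×ˢ Ioo (0:ℝ) θ₀ : Set (ℝ × ℝ)) :=
  isOpen_univ.prod isOpen_Ioo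

/-- translation invariance of set-lintegrals over the layer -/
lemma layer_trans_inv (θ₀ : ℝ) (F : ℝ × ℝ → ENNReal) (c : ℝ) :
    ∫⁻ z in (univ ×ˢ Ioo (0:ℝ) θ₀ : Set (ℝ × ℝ)), F (z + (c, 0)) =
      ∫⁻ z in (univ ×ˢ Ioo (0:ℝ) θ₀ : Set (ℝ × ℝ)), F z := by
  have hmp : MeasurePreserving (fun z : ℝ × ℝ => z + (c, 0)) volume volume :=
    measurePreserving_add_right volume (c, 0)
  have hemb : MeasurableEmbedding (fun z : ℝ × ℝ => z + (c, 0)) :=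
    (Homeomorph.addRight ((c, 0) : ℝ × ℝ)).measurableEmbedding
  have him : (fun z : ℝ × ℝ => z + (c, 0)) '' (univ ×ˢ Ioo (0:ℝ) θ₀) =
      (univ ×ˢ Ioo (0:ℝ) θ₀) := by
    ext z
    constructor
    · rintro ⟨w, hw, rfl⟩
      simp only [mem_prod, mem_univ, true_and] at hw ⊢
      simpa using hw
    · intro hz
      refine ⟨z - (c,0), ?_, by simp⟩
      simp only [mem_prod, mem_univ, true_and] at hz ⊢
      simpa using hz
  have := hmp.setLIntegral_comp_emb hemb F (univ ×ˢ Ioo (0:ℝ) θ₀)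
  rw [him] at this
  exact this

lemma rpow_add_le (p : ℝ) (hp : 0 ≤ p) {x y : ℝ} (hx : 0 ≤ x) (hy : 0 ≤ y) :
    (x + y) ^ p ≤ 2 ^ p * (x ^ p + y ^ p) := by
  have hmax : x + y ≤ 2 * max x y := by
    rcases le_total x y with h | h
    · simp [max_eq_right h]; nlinarith
    · simp [max_eq_left h]; nlinarith
  have h1 : (x + y) ^ p ≤ (2 * max x y) ^ p :=
    Real.rpow_le_rpow (by positivity) hmax hp
  have h2 : (2 * max x y) ^ p = 2 ^ p * (max x y) ^ p :=
    Real.mul_rpow (by norm_num) (le_max_of_le_left hx)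
  have h3 : (max x y) ^ p ≤ x ^ p + y ^ p := by
    rcases le_total x y with h | h
    · rw [max_eq_right h]; nlinarith [Real.rpow_nonneg hx p]
    · rw [max_eq_left h]; nlinarith [Real.rpow_nonneg hy p]
  calc (x + y) ^ p ≤ 2 ^ p * (max x y) ^ p := by rw [← h2]; exact h1
    _ ≤ 2 ^ p * (x ^ p + y ^ p) := by
        have : (0:ℝ) ≤ 2 ^ p := Real.rpow_nonneg (by norm_num) p
        nlinarith

lemma abs4_rpow (p : ℝ) (hp : 0 ≤ p) (a b c d : ℝ) :
    |a + b + c + d| ^ p ≤ 4 ^ p * (|a| ^ p + |b| ^ p + |c| ^ p + |d| ^ p) := by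
  have h0 : |a + b + c + d| ≤ (|a| + |b|) + (|c| + |d|) := by
    have he : a + b + c + d = (a + b) + (c + d) := by ring
    rw [he]
    calc |(a + b) + (c + d)| ≤ |a + b| + |c + d| := abs_add_le _ _
      _ ≤ (|a| + |b|) + (|c| + |d|) := by linarith [abs_add_le a b, abs_add_le c d]
  have h1 : |a + b + c + d| ^ p ≤ ((|a| + |b|) + (|c| + |d|)) ^ p :=
    Real.rpow_le_rpow (abs_nonneg _) h0 hp
  have h2 := rpow_add_le p hp (by positivity : (0:ℝ) ≤ |a| + |b|) (by positivity : (0:ℝ) ≤ |c| + |d|)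
  have h3 := rpow_add_le p hp (abs_nonneg a) (abs_nonneg b)
  have h4 := rpow_add_le p hp (abs_nonneg c) (abs_nonneg d)
  have h2p : (0:ℝ) ≤ 2 ^ p := Real.rpow_nonneg (by norm_num) p
  have h4p : (4:ℝ) ^ p = 2 ^ p * 2 ^ p := by
    rw [← Real.mul_rpow (by norm_num) (by norm_num)]; norm_num
  calc |a + b + c + d| ^ p ≤ ((|a| + |b|) + (|c| + |d|)) ^ p := h1
    _ ≤ 2 ^ p * ((|a| + |b|) ^ p + (|c| + |d|) ^ p) := h2
    _ ≤ 2 ^ p * (2 ^ p * (|a| ^ p + |b| ^ p) + 2 ^ p * (|c| ^ p + |d| ^ p)) := by nlinarith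
    _ = 4 ^ p * (|a| ^ p + |b| ^ p + |c| ^ p + |d| ^ p) := by rw [h4p]; ring

lemma curve_hasDerivAt (z : ℝ × ℝ) (t : ℝ) :
    HasDerivAt (fun s : ℝ => z + (s, 0)) ((1:ℝ), (0:ℝ)) t := by
  have h1 : HasDerivAt (fun s : ℝ => z.1 + s) 1 t := (hasDerivAt_id t).const_add z.1
  have h2 : HasDerivAt (fun _ : ℝ => z.2) 0 t := hasDerivAt_const t z.2
  have := h1.prodMk h2
  convert this using 1
  funext s
  simp [Prod.ext_iff]

lemma line_hasDerivAt {G : ℝ × ℝ → ℝ} (hG : ContDiff ℝ (⊤ : ℕ∞) G) (z : ℝ × ℝ) (t : ℝ) :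
    HasDerivAt (fun s : ℝ => G (z + (s, 0))) (dx G (z + (t, 0))) t := by
  have hf : HasFDerivAt G (fderiv ℝ G (z + (t, 0))) (z + (t, 0)) :=
    (hG.differentiable (by simp) _).hasFDerivAt
  have := hf.comp_hasDerivAt t (curve_hasDerivAt z t)
  simpa [dx, Function.comp_def] using this

/-- pointwise bound for the difference quotient via FTC and Hölder -/
lemma quot_pointwise {p : ℝ} (hp : 1 < p) {G : ℝ × ℝ → ℝ} (hG : ContDiff ℝ (⊤ : ℕ∞) G)
    {h : ℝ} (hh : 0 < h) (z : ℝ × ℝ) :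
    ENNReal.ofReal (|h⁻¹ * (G (z + (h, 0)) - G z)| ^ p) ≤
      (ENNReal.ofReal h)⁻¹ * ∫⁻ t in Ioc 0 h, ENNReal.ofReal (|dx G (z + (t, 0))| ^ p) := by
  have hp0 : (0:ℝ) < p := lt_trans one_pos hp
  set F : ℝ → ℝ := fun t => dx G (z + (t, 0)) with hF
  have hFcont : Continuous F := by
    have h1 : Continuous (dx G) := (dx_smooth hG).continuous
    exact h1.comp (by continuity)
  -- FTC
  have hftc : G (z + (h, 0)) - G z = ∫ t in (0:ℝ)..h, F t := by
    have := intervalIntegral.integral_eq_sub_of_hasDerivAt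
      (f := fun s => G (z + (s, 0))) (f' := F) (a := 0) (b := h)
      (fun t _ => line_hasDerivAt hG z t) (hFcont.intervalIntegrable 0 h)
    rw [this]; simp [Prod.mk_zero_zero]
  have habs : |G (z + (h, 0)) - G z| ≤ ∫ t in Ioc (0:ℝ) h, |F t| := by
    rw [hftc]
    calc |∫ t in (0:ℝ)..h, F t| ≤ ∫ t in (0:ℝ)..h, |F t| :=
          intervalIntegral.abs_integral_le_integral_abs hh.le
      _ = ∫ t in Ioc (0:ℝ) h, |F t| := intervalIntegral.integral_of_le hh.le
  -- pass to lintegral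
  have hInt : IntegrableOn (fun t => |F t|) (Ioc 0 h) volume :=
    (hFcont.abs.integrableOn_Ioc)
  have hofreal : ENNReal.ofReal (∫ t in Ioc (0:ℝ) h, |F t|) =
      ∫⁻ t in Ioc (0:ℝ) h, ENNReal.ofReal (|F t|) :=
    ofReal_integral_eq_lintegral_ofReal hInt (Filter.Eventually.of_forall fun t => abs_nonneg _)
  -- Hölder
  set q : ℝ := p / (p - 1) with hq
  have hpq : p.HolderConjugate q := Real.HolderConjugate.conjExponent hp
  set J : ENNReal := ∫⁻ t in Ioc (0:ℝ) h, ENNReal.ofReal (|F t| ^ p) with hJ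
  have hpow : ∀ t : ℝ, (ENNReal.ofReal (|F t|)) ^ p = ENNReal.ofReal (|F t| ^ p) :=
    fun t => ENNReal.ofReal_rpow_of_nonneg (abs_nonneg _) hp0.le
  have hhold : (∫⁻ t in Ioc (0:ℝ) h, ENNReal.ofReal (|F t|)) ≤
      J ^ (1/p) * (ENNReal.ofReal h) ^ (1/q) := by
    have hmeas : AEMeasurable (fun t => ENNReal.ofReal (|F t|))
        (volume.restrict (Ioc (0:ℝ) h)) :=
      (ENNReal.continuous_ofReal.comp hFcont.abs).measurable.aemeasurable
    have := ENNReal.lintegral_mul_le_Lp_mul_Lq (volume.restrict (Ioc (0:ℝ) h)) hpq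
      hmeas (aemeasurable_const (b := (1:ENNReal)))
    simp only [Pi.mul_apply, mul_one, ENNReal.one_rpow, lintegral_const, one_mul] at this
    calc (∫⁻ t in Ioc (0:ℝ) h, ENNReal.ofReal (|F t|)) ≤
        (∫⁻ t in Ioc (0:ℝ) h, (ENNReal.ofReal (|F t|)) ^ p) ^ (1/p) *
          (volume.restrict (Ioc (0:ℝ) h) univ) ^ (1/q) := by
            convert this using 2
      _ = J ^ (1/p) * (ENNReal.ofReal h) ^ (1/q) := by
            rw [hJ]
            congr 2
            · exact lintegral_congr fun t => hpow t
            · simp [Real.volume_Ioc]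
  -- assemble
  have hq1 : (1/p) * p = 1 := by field_simp
  have hq2 : (1/q) * p = p - 1 := by
    rw [hq]; field_simp
  set H : ENNReal := ENNReal.ofReal h with hH
  have hH0 : H ≠ 0 := (ENNReal.ofReal_pos.2 hh).ne'
  have hHtop : H ≠ ⊤ := ENNReal.ofReal_ne_top
  set D : ℝ := G (z + (h, 0)) - G z with hD
  have step1 : ENNReal.ofReal (|h⁻¹ * D| ^ p) =
      ENNReal.ofReal ((h⁻¹) ^ p) * ENNReal.ofReal (|D| ^ p) := by
    rw [abs_mul, abs_of_pos (inv_pos.2 hh), Real.mul_rpow (inv_pos.2 hh).le (abs_nonneg _),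
      ENNReal.ofReal_mul (Real.rpow_nonneg (inv_pos.2 hh).le p)]
  have step2 : ENNReal.ofReal (|D| ^ p) ≤ J * H ^ (p - 1) := by
    have h1 : ENNReal.ofReal (|D| ^ p) = (ENNReal.ofReal (|D|)) ^ p :=
      (ENNReal.ofReal_rpow_of_nonneg (abs_nonneg _) hp0.le).symm
    have h2 : (ENNReal.ofReal (|D|)) ^ p ≤ (ENNReal.ofReal (∫ t in Ioc (0:ℝ) h, |F t|)) ^ p :=
      ENNReal.rpow_le_rpow (ENNReal.ofReal_le_ofReal habs) hp0.le
    have h3 : (ENNReal.ofReal (∫ t in Ioc (0:ℝ) h, |F t|)) ^ p ≤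
        (J ^ (1/p) * H ^ (1/q)) ^ p := by
      rw [hofreal]
      exact ENNReal.rpow_le_rpow hhold hp0.le
    have h4 : (J ^ (1/p) * H ^ (1/q)) ^ p = J * H ^ (p - 1) := by
      rw [ENNReal.mul_rpow_of_nonneg _ _ hp0.le, ← ENNReal.rpow_mul J,
        ← ENNReal.rpow_mul H, hq1, hq2, ENNReal.rpow_one]
    rw [h1]
    exact le_trans h2 (le_trans h3 (le_of_eq h4))
  have step3 : ENNReal.ofReal ((h⁻¹) ^ p) = H⁻¹ ^ p := by
    rw [← ENNReal.ofReal_rpow_of_nonneg (inv_pos.2 hh).le hp0.le,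
      ENNReal.ofReal_inv_of_pos hh]
  calc ENNReal.ofReal (|h⁻¹ * D| ^ p) = ENNReal.ofReal ((h⁻¹) ^ p) * ENNReal.ofReal (|D| ^ p) :=
        step1
    _ ≤ H⁻¹ ^ p * (J * H ^ (p - 1)) := by
        rw [step3]; exact mul_le_mul_right step2 _
    _ = (H ^ (-p) * H ^ (p - 1)) * J := by
        rw [ENNReal.inv_rpow, ← ENNReal.rpow_neg]; ring
    _ = H⁻¹ * J := by
        rw [← ENNReal.rpow_add _ _ hH0 hHtop]
        have : -p + (p - 1) = (-1 : ℝ) := by ring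
        rw [this, ENNReal.rpow_neg_one]

/-- the difference-quotient bound in `L^p(Ω)` -/
lemma quot_bound (θ₀ : ℝ) {p : ℝ} (hp : 1 < p) {G : ℝ × ℝ → ℝ} (hG : ContDiff ℝ (⊤ : ℕ∞) G)
    {h : ℝ} (hh : 0 < h) :
    layerNormP θ₀ p (fun z => h⁻¹ * (G (z + (h, 0)) - G z)) ≤ layerNormP θ₀ p (dx G) := by
  have hp0 : (0:ℝ) < p := lt_trans one_pos hp
  set H : ENNReal := ENNReal.ofReal h with hH
  have hH0 : H ≠ 0 := (ENNReal.ofReal_pos.2 hh).ne'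
  have hHtop : H ≠ ⊤ := ENNReal.ofReal_ne_top
  set Ω : Set (ℝ × ℝ) := univ ×ˢ Ioo (0:ℝ) θ₀ with hΩ
  have hdxc : Continuous (dx G) := (dx_smooth hG).continuous
  have hjoint : Continuous (fun w : (ℝ × ℝ) × ℝ =>
      ENNReal.ofReal (|dx G (w.1 + (w.2, 0))| ^ p)) := by
    apply ENNReal.continuous_ofReal.comp
    apply Continuous.rpow_const
    · refine (hdxc.comp ?_).abs
      exact (continuous_fst).add ((continuous_snd).prodMk continuous_const)
    · exact fun _ => Or.inr hp0.le
  calc layerNormP θ₀ p (fun z => h⁻¹ * (G (z + (h, 0)) - G z))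
      ≤ ∫⁻ z in Ω, H⁻¹ * ∫⁻ t in Ioc 0 h, ENNReal.ofReal (|dx G (z + (t, 0))| ^ p) := by
        exact lintegral_mono fun z => quot_pointwise hp hG hh z
    _ = H⁻¹ * ∫⁻ z in Ω, ∫⁻ t in Ioc 0 h, ENNReal.ofReal (|dx G (z + (t, 0))| ^ p) := by
        rw [lintegral_const_mul' _ _ (ENNReal.inv_ne_top.2 hH0)]
    _ = H⁻¹ * ∫⁻ t in Ioc 0 h, ∫⁻ z in Ω, ENNReal.ofReal (|dx G (z + (t, 0))| ^ p) := by
        congr 1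
        exact lintegral_lintegral_swap (hjoint.measurable.aemeasurable)
    _ = H⁻¹ * ∫⁻ _ in Ioc (0:ℝ) h, layerNormP θ₀ p (dx G) := by
        congr 1
        exact lintegral_congr fun t =>
          layer_trans_inv θ₀ (fun w => ENNReal.ofReal (|dx G w| ^ p)) t
    _ = H⁻¹ * (layerNormP θ₀ p (dx G) * H) := by
        rw [lintegral_const, Measure.restrict_apply_univ, Real.volume_Ioc, sub_zero]
    _ = layerNormP θ₀ p (dx G) := by
        rw [mul_comm (layerNormP θ₀ p (dx G)) H, ← mul_assoc,
          ENNReal.inv_mul_cancel hH0 hHtop, one_mul]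

/-- Fatou's lemma step. -/
lemma fatou_quot (θ₀ : ℝ) {p : ℝ} (hp : 1 < p) {F : ℝ × ℝ → ℝ} (hF : ContDiff ℝ (⊤ : ℕ∞) F)
    {B : ENNReal}
    (hB : ∀ h : ℝ, 0 < h → layerNormP θ₀ p (fun z => h⁻¹ * (F (z + (h, 0)) - F z)) ≤ B) :
    layerNormP θ₀ p (dx F) ≤ B := by
  have hp0 : (0:ℝ) < p := lt_trans one_pos hp
  set c : ℕ → ℝ := fun n => (n : ℝ) + 1 with hc
  have hcpos : ∀ n, 0 < c n := fun n => by positivity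
  set fn : ℕ → ℝ × ℝ → ENNReal := fun n z =>
    ENNReal.ofReal (|(c n)⁻¹⁻¹ * (F (z + ((c n)⁻¹, 0)) - F z)| ^ p) with hfn
  have hmeasn : ∀ n, Measurable (fn n) := by
    intro n
    apply (ENNReal.continuous_ofReal.comp _).measurable
    apply Continuous.rpow_const
    · exact (continuous_const.mul ((hF.continuous.comp (continuous_id.add continuous_const)).sub
        hF.continuous)).abs
    · exact fun _ => Or.inr hp0.le
  have hlim : ∀ z : ℝ × ℝ,
      Filter.Tendsto (fun n => fn n z) Filter.atTop (nhds (ENNReal.ofReal (|dx F z| ^ p))) := by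
    intro z
    have hnorm : Filter.Tendsto (fun n => ‖c n‖) Filter.atTop Filter.atTop := by
      have h0 : Filter.Tendsto c Filter.atTop Filter.atTop :=
        Filter.tendsto_atTop_add_const_right _ 1 tendsto_natCast_atTop_atTop
      exact h0.congr fun n => (Real.norm_of_nonneg (hcpos n).le).symm
    have hbase := ((hF.differentiable (by simp) z).hasFDerivAt).lim ((1:ℝ), (0:ℝ)) hnorm
    have hrw : (fun n => c n • (F (z + (c n)⁻¹ • ((1:ℝ), (0:ℝ))) - F z)) =
        fun n => (c n)⁻¹⁻¹ * (F (z + ((c n)⁻¹, 0)) - F z) := by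
      funext n
      simp [Prod.smul_mk, smul_eq_mul, inv_inv]
    rw [hrw] at hbase
    have hcont : Continuous (fun x : ℝ => ENNReal.ofReal (|x| ^ p)) := by
      apply ENNReal.continuous_ofReal.comp
      exact continuous_abs.rpow_const fun _ => Or.inr hp0.le
    exact (hcont.continuousAt.tendsto.comp hbase)
  have h1 : layerNormP θ₀ p (dx F) =
      ∫⁻ z in (univ ×ˢ Ioo (0:ℝ) θ₀ : Set (ℝ × ℝ)),
        Filter.liminf (fun n => fn n z) Filter.atTop := by
    exact lintegral_congr fun z => ((hlim z).liminf_eq).symm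
  rw [h1]
  calc (∫⁻ z in (univ ×ˢ Ioo (0:ℝ) θ₀ : Set (ℝ × ℝ)),
        Filter.liminf (fun n => fn n z) Filter.atTop)
      ≤ Filter.liminf (fun n => ∫⁻ z in (univ ×ˢ Ioo (0:ℝ) θ₀ : Set (ℝ × ℝ)), fn n z)
          Filter.atTop := lintegral_liminf_le hmeasn
    _ ≤ B := by
        have hBn : ∀ n : ℕ, (∫⁻ z in (univ ×ˢ Ioo (0:ℝ) θ₀ : Set (ℝ × ℝ)), fn n z) ≤ B := by
          intro n
          exact hB ((c n)⁻¹) (inv_pos.2 (hcpos n))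
        refine le_trans (Filter.liminf_le_liminf (Filter.Eventually.of_forall hBn)) ?_
        simp [Filter.liminf_const]

lemma layer_quot_fin (θ₀ : ℝ) {p : ℝ} (hp : 1 < p) {F : ℝ × ℝ → ℝ} (hFc : Continuous F)
    (hFin : layerNormP θ₀ p F < ⊤) (a : ℝ) (c : ℝ) :
    layerNormP θ₀ p (fun z => a * (F (z + (c, 0)) - F z)) < ⊤ := by
  have hp0 : (0:ℝ) < p := lt_trans one_pos hp
  set K : ENNReal := ENNReal.ofReal (|a| ^ p * 2 ^ p) with hK
  have hpoint : ∀ z : ℝ × ℝ, ENNReal.ofReal (|a * (F (z + (c, 0)) - F z)| ^ p) ≤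
      K * (ENNReal.ofReal (|F (z + (c, 0))| ^ p) + ENNReal.ofReal (|F z| ^ p)) := by
    intro z
    have h1 : |a * (F (z + (c, 0)) - F z)| ^ p ≤
        |a| ^ p * (2 ^ p * (|F (z + (c, 0))| ^ p + |F z| ^ p)) := by
      rw [abs_mul, Real.mul_rpow (abs_nonneg a) (abs_nonneg _)]
      have h2 : |F (z + (c, 0)) - F z| ^ p ≤ 2 ^ p * (|F (z + (c, 0))| ^ p + |F z| ^ p) := by
        have h3 : |F (z + (c, 0)) - F z| ≤ |F (z + (c, 0))| + |F z| := abs_sub _ _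
        calc |F (z + (c, 0)) - F z| ^ p ≤ (|F (z + (c, 0))| + |F z|) ^ p :=
              Real.rpow_le_rpow (abs_nonneg _) h3 hp0.le
          _ ≤ 2 ^ p * (|F (z + (c, 0))| ^ p + |F z| ^ p) :=
              rpow_add_le p hp0.le (abs_nonneg _) (abs_nonneg _)
      have h4 : (0:ℝ) ≤ |a| ^ p := Real.rpow_nonneg (abs_nonneg a) p
      nlinarith
    calc ENNReal.ofReal (|a * (F (z + (c, 0)) - F z)| ^ p)
        ≤ ENNReal.ofReal (|a| ^ p * (2 ^ p * (|F (z + (c, 0))| ^ p + |F z| ^ p))) :=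
          ENNReal.ofReal_le_ofReal h1
      _ = K * (ENNReal.ofReal (|F (z + (c, 0))| ^ p) + ENNReal.ofReal (|F z| ^ p)) := by
          rw [hK]
          rw [← mul_assoc, ENNReal.ofReal_mul (by positivity), ENNReal.ofReal_add (by positivity) (by positivity)]
  have hmeas1 : Measurable (fun z : ℝ × ℝ => ENNReal.ofReal (|F (z + (c, 0))| ^ p)) := by
    apply (ENNReal.continuous_ofReal.comp _).measurable
    exact ((hFc.comp (by continuity)).abs).rpow_const fun _ => Or.inr hp0.le
  calc layerNormP θ₀ p (fun z => a * (F (z + (c, 0)) - F z))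
      ≤ ∫⁻ z in (univ ×ˢ Ioo (0:ℝ) θ₀ : Set (ℝ × ℝ)),
          K * (ENNReal.ofReal (|F (z + (c, 0))| ^ p) + ENNReal.ofReal (|F z| ^ p)) :=
        lintegral_mono fun z => hpoint z
    _ = K * ((∫⁻ z in (univ ×ˢ Ioo (0:ℝ) θ₀ : Set (ℝ × ℝ)),
          ENNReal.ofReal (|F (z + (c, 0))| ^ p)) + layerNormP θ₀ p F) := by
        rw [lintegral_const_mul' _ _ ENNReal.ofReal_ne_top]
        congr 1
        exact lintegral_add_left hmeas1 _
    _ = K * (layerNormP θ₀ p F + layerNormP θ₀ p F) := by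
        congr 2
        exact layer_trans_inv θ₀ (fun w => ENNReal.ofReal (|F w| ^ p)) c
    _ < ⊤ := ENNReal.mul_lt_top ENNReal.ofReal_lt_top (ENNReal.add_lt_top.2 ⟨hFin, hFin⟩)

lemma T_quot (β : ℝ) {φ : ℝ × ℝ → ℝ} (hφ : ContDiff ℝ (⊤ : ℕ∞) φ) (a : ℝ) (c : ℝ × ℝ) :
    Tlayer β (fun z => a * (φ (z + c) - φ z)) =
      fun z => a * (Tlayer β φ (z + c) - Tlayer β φ z) := by
  have e1 : dx (fun z => a * (φ (z + c) - φ z)) = fun z => a * (dx φ (z + c) - dx φ z) :=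
    pd_quot hφ a c (1, 0)
  have e2 : dx (fun z => a * (dx φ (z + c) - dx φ z)) =
      fun z => a * (dx (dx φ) (z + c) - dx (dx φ) z) := pd_quot (dx_smooth hφ) a c (1, 0)
  have e3 : dθ (fun z => a * (φ (z + c) - φ z)) = fun z => a * (dθ φ (z + c) - dθ φ z) :=
    pd_quot hφ a c (0, 1)
  have e4 : dθ (fun z => a * (dθ φ (z + c) - dθ φ z)) =
      fun z => a * (dθ (dθ φ) (z + c) - dθ (dθ φ) z) := pd_quot (dθ_smooth hφ) a c (0, 1)
  funext z
  simp only [Tlayer, e1, e2, e3, e4]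
  ring

lemma domain_quot {θ₀ p : ℝ} (hp : 1 < p) {φ : ℝ × ℝ → ℝ} (hφ : InLayerDomain θ₀ p φ)
    {h : ℝ} (hh : 0 < h) :
    InLayerDomain θ₀ p (fun z => h⁻¹ * (φ (z + (h, 0)) - φ z)) := by
  obtain ⟨hs, hfin, hb0, hb1⟩ := hφ
  have hsmooth : ContDiff ℝ (⊤ : ℕ∞) (fun z : ℝ × ℝ => h⁻¹ * (φ (z + (h, 0)) - φ z)) :=
    contDiff_const.mul ((hs.comp (contDiff_id.add contDiff_const)).sub hs)
  have edx : dx (fun z => h⁻¹ * (φ (z + (h, 0)) - φ z)) =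
      fun z => h⁻¹ * (dx φ (z + (h, 0)) - dx φ z) := pd_quot hs h⁻¹ (h, 0) (1, 0)
  have edθ : dθ (fun z => h⁻¹ * (φ (z + (h, 0)) - φ z)) =
      fun z => h⁻¹ * (dθ φ (z + (h, 0)) - dθ φ z) := pd_quot hs h⁻¹ (h, 0) (0, 1)
  have edxdx : dx (fun z => h⁻¹ * (dx φ (z + (h, 0)) - dx φ z)) =
      fun z => h⁻¹ * (dx (dx φ) (z + (h, 0)) - dx (dx φ) z) :=
    pd_quot (dx_smooth hs) h⁻¹ (h, 0) (1, 0)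
  have edxdθ : dx (fun z => h⁻¹ * (dθ φ (z + (h, 0)) - dθ φ z)) =
      fun z => h⁻¹ * (dx (dθ φ) (z + (h, 0)) - dx (dθ φ) z) :=
    pd_quot (dθ_smooth hs) h⁻¹ (h, 0) (1, 0)
  have edθdθ : dθ (fun z => h⁻¹ * (dθ φ (z + (h, 0)) - dθ φ z)) =
      fun z => h⁻¹ * (dθ (dθ φ) (z + (h, 0)) - dθ (dθ φ) z) :=
    pd_quot (dθ_smooth hs) h⁻¹ (h, 0) (0, 1)
  rw [normW2p] at hfin
  have w5 : layerNormP θ₀ p (dθ (dθ φ)) < ⊤ := lt_of_le_of_lt le_add_self hfin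
  have hfin4 := lt_of_le_of_lt le_self_add hfin
  have w4 : layerNormP θ₀ p (dx (dθ φ)) < ⊤ := lt_of_le_of_lt le_add_self hfin4
  have hfin3 := lt_of_le_of_lt le_self_add hfin4
  have w3 : layerNormP θ₀ p (dx (dx φ)) < ⊤ := lt_of_le_of_lt le_add_self hfin3
  have hfin2 := lt_of_le_of_lt le_self_add hfin3
  have w2 : layerNormP θ₀ p (dθ φ) < ⊤ := lt_of_le_of_lt le_add_self hfin2
  have hfin1 := lt_of_le_of_lt le_self_add hfin2
  have w1 : layerNormP θ₀ p (dx φ) < ⊤ := lt_of_le_of_lt le_add_self hfin1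
  have w0 : layerNormP θ₀ p φ < ⊤ := lt_of_le_of_lt le_self_add hfin1
  refine ⟨hsmooth, ?_, ?_, ?_⟩
  · rw [normW2p, edx, edθ, edxdx, edxdθ, edθdθ]
    have f0 := layer_quot_fin θ₀ hp hs.continuous w0 h⁻¹ h
    have f1 := layer_quot_fin θ₀ hp (dx_smooth hs).continuous w1 h⁻¹ h
    have f2 := layer_quot_fin θ₀ hp (dθ_smooth hs).continuous w2 h⁻¹ h
    have f3 := layer_quot_fin θ₀ hp (dx_smooth (dx_smooth hs)).continuous w3 h⁻¹ h
    have f4 := layer_quot_fin θ₀ hp (dx_smooth (dθ_smooth hs)).continuous w4 h⁻¹ h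
    have f5 := layer_quot_fin θ₀ hp (dθ_smooth (dθ_smooth hs)).continuous w5 h⁻¹ h
    exact ENNReal.add_lt_top.2 ⟨ENNReal.add_lt_top.2 ⟨ENNReal.add_lt_top.2
      ⟨ENNReal.add_lt_top.2 ⟨ENNReal.add_lt_top.2 ⟨f0, f1⟩, f2⟩, f3⟩, f4⟩, f5⟩
  · intro x
    have := congrFun edθ (x, 0)
    rw [this]
    simp [Prod.mk_add_mk, hb0]
  · intro x
    have := congrFun edθ (x, θ₀)
    rw [this]
    simp [Prod.mk_add_mk, hb1]

lemma third_x_bounds {θ₀ p β : ℝ} (hp : 1 < p) {C₀ : ENNReal}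
    (hest : ∀ ψ : ℝ × ℝ → ℝ, InLayerDomain θ₀ p ψ →
      normW2p θ₀ p ψ ≤ C₀ * layerNormP θ₀ p (Tlayer β ψ))
    {φ : ℝ × ℝ → ℝ} (hφ : InLayerDomain θ₀ p φ) :
    layerNormP θ₀ p (dx (dx (dx φ))) ≤ C₀ * layerNormP θ₀ p (dx (Tlayer β φ)) ∧
    layerNormP θ₀ p (dx (dx (dθ φ))) ≤ C₀ * layerNormP θ₀ p (dx (Tlayer β φ)) ∧
    layerNormP θ₀ p (dx (dθ (dθ φ))) ≤ C₀ * layerNormP θ₀ p (dx (Tlayer β φ)) := by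
  have hs := hφ.1
  set M := C₀ * layerNormP θ₀ p (dx (Tlayer β φ)) with hM
  have key : ∀ h : ℝ, 0 < h →
      layerNormP θ₀ p (fun z => h⁻¹ * (dx (dx φ) (z + (h, 0)) - dx (dx φ) z)) ≤ M ∧
      layerNormP θ₀ p (fun z => h⁻¹ * (dx (dθ φ) (z + (h, 0)) - dx (dθ φ) z)) ≤ M ∧
      layerNormP θ₀ p (fun z => h⁻¹ * (dθ (dθ φ) (z + (h, 0)) - dθ (dθ φ) z)) ≤ M := by
    intro h hh
    have hdom := domain_quot hp hφ hh
    have hest1 := hest _ hdom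
    rw [T_quot β hs h⁻¹ (h, 0)] at hest1
    have hqb : layerNormP θ₀ p (fun z => h⁻¹ * (Tlayer β φ (z + (h, 0)) - Tlayer β φ z)) ≤
        layerNormP θ₀ p (dx (Tlayer β φ)) := quot_bound θ₀ hp (Tlayer_smooth β hs) hh
    have hest2 : normW2p θ₀ p (fun z => h⁻¹ * (φ (z + (h, 0)) - φ z)) ≤ M :=
      le_trans hest1 (mul_le_mul_right hqb _)
    have edx : dx (fun z => h⁻¹ * (φ (z + (h, 0)) - φ z)) =
        fun z => h⁻¹ * (dx φ (z + (h, 0)) - dx φ z) := pd_quot hs h⁻¹ (h, 0) (1, 0)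
    have edθ : dθ (fun z => h⁻¹ * (φ (z + (h, 0)) - φ z)) =
        fun z => h⁻¹ * (dθ φ (z + (h, 0)) - dθ φ z) := pd_quot hs h⁻¹ (h, 0) (0, 1)
    have edxdx : dx (fun z => h⁻¹ * (dx φ (z + (h, 0)) - dx φ z)) =
        fun z => h⁻¹ * (dx (dx φ) (z + (h, 0)) - dx (dx φ) z) :=
      pd_quot (dx_smooth hs) h⁻¹ (h, 0) (1, 0)
    have edxdθ : dx (fun z => h⁻¹ * (dθ φ (z + (h, 0)) - dθ φ z)) =
        fun z => h⁻¹ * (dx (dθ φ) (z + (h, 0)) - dx (dθ φ) z) :=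
      pd_quot (dθ_smooth hs) h⁻¹ (h, 0) (1, 0)
    have edθdθ : dθ (fun z => h⁻¹ * (dθ φ (z + (h, 0)) - dθ φ z)) =
        fun z => h⁻¹ * (dθ (dθ φ) (z + (h, 0)) - dθ (dθ φ) z) :=
      pd_quot (dθ_smooth hs) h⁻¹ (h, 0) (0, 1)
    rw [normW2p, edx, edθ, edxdx, edxdθ, edθdθ] at hest2
    refine ⟨?_, ?_, ?_⟩
    · exact le_trans (le_trans le_add_self (le_trans le_self_add le_self_add)) hest2
    · exact le_trans (le_trans le_add_self le_self_add) hest2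
    · exact le_trans le_add_self hest2
  refine ⟨?_, ?_, ?_⟩
  · exact fatou_quot θ₀ hp (dx_smooth (dx_smooth hs)) fun h hh => (key h hh).1
  · exact fatou_quot θ₀ hp (dx_smooth (dθ_smooth hs)) fun h hh => (key h hh).2.1
  · exact fatou_quot θ₀ hp (dθ_smooth (dθ_smooth hs)) fun h hh => (key h hh).2.2

lemma pd_comb {f1 f2 f3 f4 : ℝ × ℝ → ℝ} (h1 : ContDiff ℝ (⊤ : ℕ∞) f1) (h2 : ContDiff ℝ (⊤ : ℕ∞) f2)
    (h3 : ContDiff ℝ (⊤ : ℕ∞) f3) (h4 : ContDiff ℝ (⊤ : ℕ∞) f4) (a b : ℝ) (v : ℝ × ℝ) :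
    pd v (fun z => -f1 z - f2 z - a * f3 z - b * f4 z) =
      fun z => -pd v f1 z - pd v f2 z - a * pd v f3 z - b * pd v f4 z := by
  funext z
  have H : HasFDerivAt (fun z => -f1 z - f2 z - a * f3 z - b * f4 z)
      (-fderiv ℝ f1 z - fderiv ℝ f2 z - a • fderiv ℝ f3 z - b • fderiv ℝ f4 z) z :=
    ((((h1.differentiable (by simp) z).hasFDerivAt.neg).sub
      (h2.differentiable (by simp) z).hasFDerivAt).sub
      ((h3.differentiable (by simp) z).hasFDerivAt.const_mul a)).sub
      ((h4.differentiable (by simp) z).hasFDerivAt.const_mul b)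
  simp only [pd, H.fderiv]
  simp
/-- Higher regularity for the transformed Neumann-Laplace problem on the layer
`Ω = ℝ × (0,θ₀)`: suppose `T_p φ = -(∂_x + β)²φ - ∂_θ²φ` with domain
`D(T_p) = {φ ∈ W^{2,p}(Ω) : ∂_θ φ = 0 on ∂Ω}` is an isomorphism onto `L^p(Ω)`
(surjectivity together with an a priori `W^{2,p}` estimate). Then for every
`g ∈ W^{1,p}(Ω)` the solution `φ ∈ D(T_p)` of `T_p φ = g` satisfies `φ ∈ W^{3,p}(Ω)`
with `‖φ‖_{W^{3,p}(Ω)} ≤ C ‖g‖_{W^{1,p}(Ω)}`, `C` independent of `φ` and `g`. -/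
theorem higher_regularity_layer (θ₀ p β : ℝ) (hθ : 0 < θ₀) (hp : 1 < p)
    (hsurj : ∀ g : ℝ × ℝ → ℝ, ContDiff ℝ (⊤ : ℕ∞) g → layerNormP θ₀ p g < ⊤ →
      ∃ φ : ℝ × ℝ → ℝ, InLayerDomain θ₀ p φ ∧
        ∀ z ∈ (univ ×ˢ Ioo (0:ℝ) θ₀ : Set (ℝ × ℝ)), Tlayer β φ z = g z)
    (hest : ∃ C₀ : ENNReal, 0 < C₀ ∧ C₀ < ⊤ ∧ ∀ φ : ℝ × ℝ → ℝ, InLayerDomain θ₀ p φ →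
      normW2p θ₀ p φ ≤ C₀ * layerNormP θ₀ p (Tlayer β φ)) :
    ∃ C : ENNReal, 0 < C ∧ C < ⊤ ∧
      ∀ φ g : ℝ × ℝ → ℝ, InLayerDomain θ₀ p φ →
        (∀ z ∈ (univ ×ˢ Ioo (0:ℝ) θ₀ : Set (ℝ × ℝ)), Tlayer β φ z = g z) →
        normW1p θ₀ p g < ⊤ →
        normThird θ₀ p φ < ⊤ ∧
          normW2p θ₀ p φ + normThird θ₀ p φ ≤ C * normW1p θ₀ p g := by
  obtain ⟨C₀, hC₀, hC₀top, hest⟩ := hest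
  have hp0 : (0:ℝ) < p := lt_trans one_pos hp
  set o4 : ENNReal := ENNReal.ofReal (4 ^ p) with ho4
  set o2 : ENNReal := ENNReal.ofReal ((2 * |β|) ^ p) with ho2
  set o3 : ENNReal := ENNReal.ofReal ((β ^ 2) ^ p) with ho3
  set C : ENNReal := C₀ + C₀ + C₀ + C₀ + o4 * (1 + C₀ + o2 * C₀ + o3 * C₀) with hC
  have hCtop : C < ⊤ := by
    rw [hC]
    refine ENNReal.add_lt_top.2 ⟨ENNReal.add_lt_top.2 ⟨ENNReal.add_lt_top.2
      ⟨ENNReal.add_lt_top.2 ⟨hC₀top, hC₀top⟩, hC₀top⟩, hC₀top⟩, ?_⟩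
    refine ENNReal.mul_lt_top ENNReal.ofReal_lt_top ?_
    refine ENNReal.add_lt_top.2 ⟨ENNReal.add_lt_top.2 ⟨ENNReal.add_lt_top.2
      ⟨ENNReal.one_lt_top, hC₀top⟩, ENNReal.mul_lt_top ENNReal.ofReal_lt_top hC₀top⟩,
      ENNReal.mul_lt_top ENNReal.ofReal_lt_top hC₀top⟩
  refine ⟨C, ?_, hCtop, ?_⟩
  · refine lt_of_lt_of_le hC₀ ?_
    rw [hC]
    exact le_self_add.trans (le_self_add.trans (le_self_add.trans le_self_add))
  intro φ g hφ hTg hg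
  have hs := hφ.1
  have hGs : ContDiff ℝ (⊤ : ℕ∞) (Tlayer β φ) := Tlayer_smooth β hs
  set A := normW1p θ₀ p g with hA
  -- identify layer norms of g with those of Tlayer β φ on Ω
  have h1 : layerNormP θ₀ p (Tlayer β φ) = layerNormP θ₀ p g :=
    setLIntegral_congr_fun (omega_meas θ₀)
      (fun z hz => by rw [hTg z hz])
  have hfd : ∀ z ∈ (univ ×ˢ Ioo (0:ℝ) θ₀ : Set (ℝ × ℝ)),
      fderiv ℝ (Tlayer β φ) z = fderiv ℝ g z := by
    intro z hz
    have hev : Tlayer β φ =ᶠ[nhds z] g :=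
      Filter.eventuallyEq_of_mem ((omega_open θ₀).mem_nhds hz) fun w hw => hTg w hw
    exact hev.fderiv_eq
  have h2 : layerNormP θ₀ p (dx (Tlayer β φ)) = layerNormP θ₀ p (dx g) :=
    setLIntegral_congr_fun (omega_meas θ₀)
      (fun z hz => by beta_reduce; rw [dx, dx, hfd z hz])
  have h3 : layerNormP θ₀ p (dθ (Tlayer β φ)) = layerNormP θ₀ p (dθ g) :=
    setLIntegral_congr_fun (omega_meas θ₀)
      (fun z hz => by beta_reduce; rw [dθ, dθ, hfd z hz])
  -- components of A
  have hA0 : layerNormP θ₀ p g ≤ A := le_self_add.trans le_self_add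
  have hA1 : layerNormP θ₀ p (dx g) ≤ A := le_add_self.trans le_self_add
  have hA2 : layerNormP θ₀ p (dθ g) ≤ A := le_add_self
  -- base W2 estimate
  have hW2 : normW2p θ₀ p φ ≤ C₀ * A := by
    refine le_trans (hest φ hφ) ?_
    rw [h1]
    exact mul_le_mul_right hA0 _
  obtain ⟨t1, t2', t3'⟩ := third_x_bounds hp hest hφ
  have hMA : C₀ * layerNormP θ₀ p (dx (Tlayer β φ)) ≤ C₀ * A := by
    rw [h2]; exact mul_le_mul_right hA1 _
  -- swaps
  have sA : dθ (dx φ) = dx (dθ φ) := pd_comm hs (1, 0) (0, 1)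
  have s1 : dθ (dx (dx φ)) = dx (dx (dθ φ)) := by
    have e1 : dθ (dx (dx φ)) = dx (dθ (dx φ)) := pd_comm (dx_smooth hs) (1, 0) (0, 1)
    rw [e1, sA]
  have s2 : dθ (dθ (dx φ)) = dx (dθ (dθ φ)) := by
    have e1 : dθ (dθ (dx φ)) = dθ (dx (dθ φ)) := by rw [sA]
    rw [e1]
    exact pd_comm (dθ_smooth hs) (1, 0) (0, 1)
  -- W2 components
  have hw_dθ : layerNormP θ₀ p (dθ φ) ≤ C₀ * A := by
    refine le_trans ?_ hW2
    rw [normW2p]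
    exact (le_add_self.trans (le_self_add.trans (le_self_add.trans le_self_add)))
  have hw_dxdθ : layerNormP θ₀ p (dθ (dx φ)) ≤ C₀ * A := by
    rw [sA]
    refine le_trans ?_ hW2
    rw [normW2p]
    exact le_add_self.trans le_self_add
  -- third order bounds in x
  have hb1 : layerNormP θ₀ p (dx (dx (dx φ))) ≤ C₀ * A := le_trans t1 hMA
  have hb2 : layerNormP θ₀ p (dθ (dx (dx φ))) ≤ C₀ * A := by
    rw [s1]; exact le_trans t2' hMA
  have hb3 : layerNormP θ₀ p (dθ (dθ (dx φ))) ≤ C₀ * A := by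
    rw [s2]; exact le_trans t3' hMA
  -- the equation and the θθθ derivative
  have heq : dθ (dθ φ) = fun z =>
      -Tlayer β φ z - dx (dx φ) z - 2 * β * dx φ z - β ^ 2 * φ z := by
    funext z
    simp only [Tlayer]
    ring
  have heq3 : dθ (dθ (dθ φ)) = fun z =>
      -dθ (Tlayer β φ) z - dθ (dx (dx φ)) z - 2 * β * dθ (dx φ) z - β ^ 2 * dθ φ z := by
    rw [heq]
    exact pd_comb hGs (dx_smooth (dx_smooth hs)) (dx_smooth hs) hs (2 * β) (β ^ 2) (0, 1)
  have hT4 : layerNormP θ₀ p (dθ (dθ (dθ φ))) ≤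
      o4 * (layerNormP θ₀ p (dθ (Tlayer β φ)) + layerNormP θ₀ p (dθ (dx (dx φ))) +
        o2 * layerNormP θ₀ p (dθ (dx φ)) + o3 * layerNormP θ₀ p (dθ φ)) := by
    rw [heq3]
    have hpoint : ∀ z : ℝ × ℝ,
        ENNReal.ofReal (|(-dθ (Tlayer β φ) z - dθ (dx (dx φ)) z - 2 * β * dθ (dx φ) z -
            β ^ 2 * dθ φ z)| ^ p) ≤
          o4 * (ENNReal.ofReal (|dθ (Tlayer β φ) z| ^ p) +
            ENNReal.ofReal (|dθ (dx (dx φ)) z| ^ p) +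
            o2 * ENNReal.ofReal (|dθ (dx φ) z| ^ p) +
            o3 * ENNReal.ofReal (|dθ φ z| ^ p)) := by
      intro z
      set a1 := dθ (Tlayer β φ) z
      set a2 := dθ (dx (dx φ)) z
      set a3 := dθ (dx φ) z
      set a4 := dθ φ z
      have h0 := abs4_rpow p hp0.le (-a1) (-a2) (-(2 * β * a3)) (-(β ^ 2 * a4))
      have harg : (-a1) + (-a2) + (-(2 * β * a3)) + (-(β ^ 2 * a4)) =
          -a1 - a2 - 2 * β * a3 - β ^ 2 * a4 := by ring
      rw [harg, abs_neg, abs_neg, abs_neg, abs_neg] at h0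
      have hm1 : |2 * β * a3| ^ p = (2 * |β|) ^ p * |a3| ^ p := by
        rw [abs_mul, abs_mul, abs_two, Real.mul_rpow (by positivity) (abs_nonneg _)]
      have hm2 : |β ^ 2 * a4| ^ p = (β ^ 2) ^ p * |a4| ^ p := by
        rw [abs_mul, abs_of_nonneg (sq_nonneg β), Real.mul_rpow (sq_nonneg β) (abs_nonneg _)]
      rw [hm1, hm2] at h0
      calc ENNReal.ofReal (|(-a1 - a2 - 2 * β * a3 - β ^ 2 * a4)| ^ p)
          ≤ ENNReal.ofReal (4 ^ p * (|a1| ^ p + |a2| ^ p +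
              (2 * |β|) ^ p * |a3| ^ p + (β ^ 2) ^ p * |a4| ^ p)) :=
            ENNReal.ofReal_le_ofReal h0
        _ = o4 * (ENNReal.ofReal (|a1| ^ p) + ENNReal.ofReal (|a2| ^ p) +
              o2 * ENNReal.ofReal (|a3| ^ p) + o3 * ENNReal.ofReal (|a4| ^ p)) := by
            rw [ENNReal.ofReal_mul (by positivity), ho4, ho2, ho3]
            congr 1
            rw [ENNReal.ofReal_add (by positivity) (by positivity),
              ENNReal.ofReal_add (by positivity) (by positivity),
              ENNReal.ofReal_add (by positivity) (by positivity),
              ENNReal.ofReal_mul (by positivity), ENNReal.ofReal_mul (by positivity)]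
    have hma : Measurable (fun z : ℝ × ℝ => ENNReal.ofReal (|dθ (Tlayer β φ) z| ^ p)) :=
      (ENNReal.continuous_ofReal.comp (((dθ_smooth hGs).continuous.abs).rpow_const
        fun _ => Or.inr hp0.le)).measurable
    have hmb : Measurable (fun z : ℝ × ℝ => ENNReal.ofReal (|dθ (dx (dx φ)) z| ^ p)) :=
      (ENNReal.continuous_ofReal.comp (((dθ_smooth (dx_smooth (dx_smooth hs))).continuous.abs).rpow_const
        fun _ => Or.inr hp0.le)).measurable
    have hmc : Measurable (fun z : ℝ × ℝ => o2 * ENNReal.ofReal (|dθ (dx φ) z| ^ p)) :=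
      (measurable_const.mul ((ENNReal.continuous_ofReal.comp
        (((dθ_smooth (dx_smooth hs)).continuous.abs).rpow_const
          fun _ => Or.inr hp0.le)).measurable))
    calc (∫⁻ z in (univ ×ˢ Ioo (0:ℝ) θ₀ : Set (ℝ × ℝ)),
          ENNReal.ofReal (|(-dθ (Tlayer β φ) z - dθ (dx (dx φ)) z - 2 * β * dθ (dx φ) z -
            β ^ 2 * dθ φ z)| ^ p))
        ≤ ∫⁻ z in (univ ×ˢ Ioo (0:ℝ) θ₀ : Set (ℝ × ℝ)),
            o4 * (ENNReal.ofReal (|dθ (Tlayer β φ) z| ^ p) +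
              ENNReal.ofReal (|dθ (dx (dx φ)) z| ^ p) +
              o2 * ENNReal.ofReal (|dθ (dx φ) z| ^ p) +
              o3 * ENNReal.ofReal (|dθ φ z| ^ p)) := lintegral_mono fun z => hpoint z
      _ = o4 * (layerNormP θ₀ p (dθ (Tlayer β φ)) + layerNormP θ₀ p (dθ (dx (dx φ))) +
            o2 * layerNormP θ₀ p (dθ (dx φ)) + o3 * layerNormP θ₀ p (dθ φ)) := by
          rw [lintegral_const_mul' _ _ ENNReal.ofReal_ne_top]
          congr 1
          rw [lintegral_add_left ((hma.fun_add hmb).fun_add hmc),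
            lintegral_add_left (hma.fun_add hmb), lintegral_add_left hma,
            lintegral_const_mul' _ _ ENNReal.ofReal_ne_top,
            lintegral_const_mul' _ _ ENNReal.ofReal_ne_top]
          rfl
  have hb4 : layerNormP θ₀ p (dθ (dθ (dθ φ))) ≤
      o4 * (A + C₀ * A + o2 * (C₀ * A) + o3 * (C₀ * A)) := by
    refine le_trans hT4 (mul_le_mul_right ?_ _)
    refine add_le_add (add_le_add (add_le_add ?_ hb2) (mul_le_mul_right hw_dxdθ _))
      (mul_le_mul_right hw_dθ _)
    rw [h3]; exact hA2
  have hthird : normThird θ₀ p φ ≤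
      C₀ * A + C₀ * A + C₀ * A + o4 * (A + C₀ * A + o2 * (C₀ * A) + o3 * (C₀ * A)) := by
    rw [normThird]
    exact add_le_add (add_le_add (add_le_add hb1 hb2) hb3) hb4
  have htot : normW2p θ₀ p φ + normThird θ₀ p φ ≤ C * A := by
    have hsum := add_le_add hW2 hthird
    refine le_trans hsum (le_of_eq ?_)
    rw [hC]
    ring
  refine ⟨?_, htot⟩
  exact lt_of_le_of_lt (le_trans le_add_self htot) (ENNReal.mul_lt_top hCtop hg)
end
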